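/- Lemma (sign and magnitude of λ_3). Let ℓ, c, r_x, β > 0 and γ ∈ (0,1) with c·r_x < 1 and (A_3 + B_3·β)² ≥ 4·ℓ·c·β·γ. Then λ_3 < 0 and ℓ·c·γ·β/(A_3 + B_3·β) ≤ −λ_3 ≤ 2·ℓ·c·γ·β/(A_3 + B_3·β). -/

import Mathlib

/-!
`λ₃` is the larger root `(-S + √(S² - 4K))/2` of `x² + S x + K`, with `S = A₃ + B₃β > 0` and
`K = ℓcβγ > 0`. Rationalising gives `-λ₃ = 2K / (S + √(S² - 4K))`, and `0 ≤ √(S² - 4K) < S`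
squeezes this between `K/S` and `2K/S`.
-/

noncomputable section

/-- `A₃ = ℓcγ + c r_x`. -/
def A3 (l c rx γ : ℝ) : ℝ := l * c * γ + c * rx

/-- `B₃ = 1 − c r_x`. -/
def B3 (c rx : ℝ) : ℝ := 1 - c * rx

/-- `λ₃ = −(A₃ + B₃β)/2 + (1/2)·√((A₃ + B₃β)² − 4ℓcβγ)`. -/
def lam3 (l c rx γ β : ℝ) : ℝ :=
  -(A3 l c rx γ + B3 c rx * β) / 2 +
    Real.sqrt ((A3 l c rx γ + B3 c rx * β) ^ 2 - 4 * l * c * β * γ) / 2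

section LargerRoot

variable {S K : ℝ}

theorem sqrt_sq_sub_four_mul_lt (hS : 0 < S) (hK : 0 < K) : √(S ^ 2 - 4 * K) < S :=
  (Real.sqrt_lt' hS).2 (by linarith)

theorem neg_larger_root_eq (hS : 0 < S) (hdisc : 4 * K ≤ S ^ 2) :
    -(-S / 2 + √(S ^ 2 - 4 * K) / 2) = 2 * K / (S + √(S ^ 2 - 4 * K)) := by
  have hsq : √(S ^ 2 - 4 * K) ^ 2 = S ^ 2 - 4 * K := Real.sq_sqrt (by linarith)
  have hpos : 0 < S + √(S ^ 2 - 4 * K) := by positivity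
  field_simp
  linear_combination -hsq

theorem larger_root_neg_and_bounds (hS : 0 < S) (hK : 0 < K) (hdisc : 4 * K ≤ S ^ 2) :
    -S / 2 + √(S ^ 2 - 4 * K) / 2 < 0 ∧
      K / S ≤ -(-S / 2 + √(S ^ 2 - 4 * K) / 2) ∧
      -(-S / 2 + √(S ^ 2 - 4 * K) / 2) ≤ 2 * K / S := by
  have hlt := sqrt_sq_sub_four_mul_lt hS hK
  have hnn := Real.sqrt_nonneg (S ^ 2 - 4 * K)
  rw [neg_larger_root_eq hS hdisc]
  refine ⟨by linarith, ?_, ?_⟩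
  · calc K / S = 2 * K / (2 * S) := by field_simp
      _ ≤ 2 * K / (S + √(S ^ 2 - 4 * K)) := by gcongr; linarith
  · gcongr
    linarith

end LargerRoot

/-- Sign and magnitude of the eigenvalue `λ₃` of the frozen-dual recursion of
Perturbed Smoothed GDA on the hard OS instance. -/
theorem lam3_sign_and_magnitude
    (l c rx β γ : ℝ)
    (hl : 0 < l) (hc : 0 < c) (hrx : 0 < rx) (hβ : 0 < β)
    (hγ : γ ∈ Set.Ioo (0 : ℝ) 1) (hcrx : c * rx < 1)
    (hdisc : (A3 l c rx γ + B3 c rx * β) ^ 2 ≥ 4 * l * c * β * γ) :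
    lam3 l c rx γ β < 0 ∧
    l * c * γ * β / (A3 l c rx γ + B3 c rx * β) ≤ -(lam3 l c rx γ β) ∧
    -(lam3 l c rx γ β) ≤ 2 * l * c * γ * β / (A3 l c rx γ + B3 c rx * β) := by
  have hγ0 : 0 < γ := hγ.1
  have hA : 0 < A3 l c rx γ := by unfold A3; positivity
  have hB : 0 < B3 c rx := sub_pos.2 hcrx
  have hS : 0 < A3 l c rx γ + B3 c rx * β := by positivity
  have hK : 0 < l * c * γ * β := by positivity
  have h4K : 4 * l * c * β * γ = 4 * (l * c * γ * β) := by ring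
  have h2K : 2 * l * c * γ * β = 2 * (l * c * γ * β) := by ring
  rw [ge_iff_le, h4K] at hdisc
  rw [lam3, h4K, h2K]
  exact larger_root_neg_and_bounds hS hK hdisc
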